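/- Let S : X → E be an admissible impact map and A ⊂ E an admissible acceptance set. Then the systemic acceptance set admits the representation S^{-1}(A) = ⋂_{Z ∈ X'} {X ∈ X : E[⟨X,Z⟩] ≥ α(Z)}. Moreover, if bar(A) ∩ E'_{++} ≠ ∅, then also S^{-1}(A) = ⋂_{Z ∈ X'} {X ∈ X : E[⟨X,Z⟩] ≥ α⁺(Z)}. -/

import Mathlib

/-!
The inclusion `S⁻¹(A) ⊆ ⋂ …` holds because every term of the supremum defining the penalty at `Z`
is at most `E[⟨X, Z⟩]` when `S(X) ∈ A`. Conversely, let `X ∉ S⁻¹(A)`. As `A` is convex and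
`σ(E, E')`-closed, Hahn–Banach gives `W ∈ E'` with `E[S(X) W] < u ≤ inf_{U ∈ A} E[U W]`, and
`A + E₊ ⊆ A` forces `W ≥ 0`. Then `Y ↦ E[S(Y) W]` is concave and `σ(X, X')`-upper
semicontinuous, so its hypograph is closed and convex; separating it from a point `(X, c)` with
`E[S(X) W] < c < u` yields `Z ∈ X'` such that `E[S(Y) W] ≤ c + E[⟨Y - X, Z⟩]` for all `Y`. The
`W`-term of `α(Z)` is then at least `u + E[⟨X, Z⟩] - c > E[⟨X, Z⟩]`. For `α⁺`, replace `W` by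
`(1 - λ) W + λ W₀` with `W₀ ∈ bar(A) ∩ E'₊₊` and `λ > 0` small: it is strictly positive and still
separates `S(X)` from `A`.
-/

open MeasureTheory Filter Set
open scoped ENNReal

noncomputable section

namespace SystemicRisk

variable {Ω : Type*} [MeasurableSpace Ω]

/-- A random variable is essentially bounded. -/
def EssBdd {μ : Measure Ω} (f : Ω →ₘ[μ] ℝ) : Prop :=
  ∃ C : ℝ, ∀ᵐ ω ∂μ, |f ω| ≤ C

/-- The scalar pairing `E[U W]`. -/
def ip {μ : Measure Ω} (U W : Ω →ₘ[μ] ℝ) : ℝ := ∫ ω, U ω * W ω ∂μ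

/-- The Köthe dual of a set of random variables. -/
def kdual {μ : Measure Ω} (L : Set (Ω →ₘ[μ] ℝ)) : Set (Ω →ₘ[μ] ℝ) :=
  {Z | ∀ f ∈ L, Integrable (fun ω => f ω * Z ω) μ}

/-- `nrm` is a Banach lattice norm on `L` (w.r.t. the a.s. order). -/
structure IsBLNorm {μ : Measure Ω} (L : Set (Ω →ₘ[μ] ℝ)) (nrm : (Ω →ₘ[μ] ℝ) → ℝ) : Prop where
  nonneg : ∀ f ∈ L, 0 ≤ nrm f
  eq_zero_iff : ∀ f ∈ L, (nrm f = 0 ↔ f = 0)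
  smul_eq : ∀ f ∈ L, ∀ c : ℝ, nrm (c • f) = |c| * nrm f
  triangle : ∀ f ∈ L, ∀ g ∈ L, nrm (f + g) ≤ nrm f + nrm g
  solid : ∀ f ∈ L, ∀ g ∈ L, |f| ≤ |g| → nrm f ≤ nrm g
  complete : ∀ u : ℕ → (Ω →ₘ[μ] ℝ), (∀ n, u n ∈ L) →
      (∀ ε : ℝ, 0 < ε → ∃ N : ℕ, ∀ m ≥ N, ∀ n ≥ N, nrm (u m - u n) < ε) →
      ∃ f ∈ L, ∀ ε : ℝ, 0 < ε → ∃ N : ℕ, ∀ n ≥ N, nrm (u n - f) < ε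

/-- `L` is an admissible space: a linear subspace of `L^0` which is a Banach lattice
(for the a.s. order, with norm `nrm`) satisfying `L^∞ ⊆ L ⊆ L^1`. -/
structure IsAdmissible {μ : Measure Ω} (L : Set (Ω →ₘ[μ] ℝ)) (nrm : (Ω →ₘ[μ] ℝ) → ℝ) : Prop where
  zero_mem : (0 : Ω →ₘ[μ] ℝ) ∈ L
  add_mem : ∀ f ∈ L, ∀ g ∈ L, f + g ∈ L
  smul_mem : ∀ (c : ℝ), ∀ f ∈ L, c • f ∈ L
  sup_mem : ∀ f ∈ L, ∀ g ∈ L, f ⊔ g ∈ L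
  inf_mem : ∀ f ∈ L, ∀ g ∈ L, f ⊓ g ∈ L
  linfty_subset : ∀ f, EssBdd f → f ∈ L
  subset_lone : ∀ f ∈ L, Integrable f μ
  banach : IsBLNorm L nrm

variable {d : ℕ}

/-- The product space `X = X_1 × ⋯ × X_d`. -/
def prodSet {μ : Measure Ω} (Li : Fin d → Set (Ω →ₘ[μ] ℝ)) : Set (Fin d → (Ω →ₘ[μ] ℝ)) :=
  {X | ∀ i, X i ∈ Li i}

/-- The vector pairing `E[⟨X,Z⟩] = ∑ i, E[X_i Z_i]`. -/
def pairing {μ : Measure Ω} (X Z : Fin d → (Ω →ₘ[μ] ℝ)) : ℝ := ∑ i, ip (X i) (Z i)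

/-- The constant random vector associated with `m ∈ ℝ^d`. -/
def cvec (μ : Measure Ω) (m : Fin d → ℝ) : Fin d → (Ω →ₘ[μ] ℝ) :=
  fun i => (AEEqFun.const Ω (m i) : Ω →ₘ[μ] ℝ)

/-- The weak topology `σ(P, D)` on a set of random vectors `P` induced by the pairing
with elements of `D`. -/
def wtop {μ : Measure Ω} (P D : Set (Fin d → (Ω →ₘ[μ] ℝ))) : TopologicalSpace ↥P :=
  TopologicalSpace.induced
    (fun X : ↥P => fun Z : ↥D => pairing (X : Fin d → (Ω →ₘ[μ] ℝ)) (Z : Fin d → (Ω →ₘ[μ] ℝ)))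
    Pi.topologicalSpace

/-- The weak topology `σ(P, D)` on a set of random variables `P` induced by the pairing
with elements of `D`. -/
def wtop1 {μ : Measure Ω} (P D : Set (Ω →ₘ[μ] ℝ)) : TopologicalSpace ↥P :=
  TopologicalSpace.induced
    (fun U : ↥P => fun W : ↥D => ip (U : Ω →ₘ[μ] ℝ) (W : Ω →ₘ[μ] ℝ))
    Pi.topologicalSpace

/-- An admissible impact map `S : X → E`. -/
structure IsAdmissibleImpact {μ : Measure Ω} (XX XX' : Set (Fin d → (Ω →ₘ[μ] ℝ)))
    (EE EE' : Set (Ω →ₘ[μ] ℝ)) (S : (Fin d → (Ω →ₘ[μ] ℝ)) → (Ω →ₘ[μ] ℝ)) : Prop where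
  mapsTo : ∀ X ∈ XX, S X ∈ EE
  nonconst : ∃ X ∈ XX, ∃ Y ∈ XX, S X ≠ S Y
  normalized : S 0 = 0
  mono : ∀ X ∈ XX, ∀ Y ∈ XX, X ≤ Y → S X ≤ S Y
  concave : ∀ X ∈ XX, ∀ Y ∈ XX, ∀ t : ℝ, 0 ≤ t → t ≤ 1 →
      t • S X + (1 - t) • S Y ≤ S (t • X + (1 - t) • Y)
  usc : ∀ W ∈ EE', (0 : Ω →ₘ[μ] ℝ) ≤ W →
      @UpperSemicontinuous (↥XX) ℝ (wtop XX XX') _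
        (fun X : ↥XX => ∫ ω, S (X : Fin d → (Ω →ₘ[μ] ℝ)) ω * W ω ∂μ)

/-- An admissible acceptance set `A ⊆ E` (relative to the impact map `S`). -/
structure IsAdmissibleAcceptance {μ : Measure Ω} (XX : Set (Fin d → (Ω →ₘ[μ] ℝ)))
    (EE EE' : Set (Ω →ₘ[μ] ℝ)) (S : (Fin d → (Ω →ₘ[μ] ℝ)) → (Ω →ₘ[μ] ℝ))
    (A : Set (Ω →ₘ[μ] ℝ)) : Prop where
  subset : A ⊆ EE
  preimage_nonempty : ∃ X ∈ XX, S X ∈ A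
  preimage_proper : ∃ X ∈ XX, S X ∉ A
  zero_mem : (0 : Ω →ₘ[μ] ℝ) ∈ A
  mono : ∀ U ∈ A, ∀ V ∈ EE, (0 : Ω →ₘ[μ] ℝ) ≤ V → U + V ∈ A
  convex : ∀ U ∈ A, ∀ V ∈ A, ∀ t : ℝ, 0 ≤ t → t ≤ 1 → t • U + (1 - t) • V ∈ A
  closed : @IsClosed (↥EE) (wtop1 EE EE') {U : ↥EE | (U : Ω →ₘ[μ] ℝ) ∈ A}

/-- The systemic acceptance set `S⁻¹(A) = {X ∈ X : S(X) ∈ A}`. -/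
def sysAcc {μ : Measure Ω} (XX : Set (Fin d → (Ω →ₘ[μ] ℝ)))
    (S : (Fin d → (Ω →ₘ[μ] ℝ)) → (Ω →ₘ[μ] ℝ)) (A : Set (Ω →ₘ[μ] ℝ)) :
    Set (Fin d → (Ω →ₘ[μ] ℝ)) :=
  {X ∈ XX | S X ∈ A}

/-- The "first allocate, then aggregate" systemic risk measure `ρ`. -/
def rho (μ : Measure Ω) (S : (Fin d → (Ω →ₘ[μ] ℝ)) → (Ω →ₘ[μ] ℝ)) (A : Set (Ω →ₘ[μ] ℝ))
    (X : Fin d → (Ω →ₘ[μ] ℝ)) : EReal :=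
  ⨅ m ∈ {m : Fin d → ℝ | S (X + cvec μ m) ∈ A}, ((∑ i, m i : ℝ) : EReal)

/-- The (lower) support function of a set of random vectors. -/
def suppV {μ : Measure Ω} (B : Set (Fin d → (Ω →ₘ[μ] ℝ))) (Z : Fin d → (Ω →ₘ[μ] ℝ)) : EReal :=
  ⨅ X ∈ B, ((pairing X Z : ℝ) : EReal)

/-- The barrier cone of a set of random vectors, inside the dual set `D`. -/
def barrV {μ : Measure Ω} (B D : Set (Fin d → (Ω →ₘ[μ] ℝ))) : Set (Fin d → (Ω →ₘ[μ] ℝ)) :=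
  {Z ∈ D | ⊥ < suppV B Z}

/-- The (lower) support function of a set of random variables. -/
def suppS {μ : Measure Ω} (A : Set (Ω →ₘ[μ] ℝ)) (W : Ω →ₘ[μ] ℝ) : EReal :=
  ⨅ U ∈ A, ((ip U W : ℝ) : EReal)

/-- The barrier cone of a set of random variables, inside the dual set `D`. -/
def barrS {μ : Measure Ω} (A D : Set (Ω →ₘ[μ] ℝ)) : Set (Ω →ₘ[μ] ℝ) :=
  {W ∈ D | ⊥ < suppS A W}

/-- The generic penalty function with dual variables `W` ranging over `K`. -/
def penalty {μ : Measure Ω} (XX : Set (Fin d → (Ω →ₘ[μ] ℝ)))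
    (A : Set (Ω →ₘ[μ] ℝ)) (S : (Fin d → (Ω →ₘ[μ] ℝ)) → (Ω →ₘ[μ] ℝ))
    (K : Set (Ω →ₘ[μ] ℝ)) (Z : Fin d → (Ω →ₘ[μ] ℝ)) : EReal :=
  ⨆ W ∈ K, (suppS A W +
    ⨅ X ∈ XX, ((pairing X Z - ∫ ω, S X ω * W ω ∂μ : ℝ) : EReal))

/-- a.s. strictly positive random variables. -/
def strictPos (μ : Measure Ω) : Set (Ω →ₘ[μ] ℝ) := {W | ∀ᵐ ω ∂μ, 0 < W ω}

/-- The penalty function `α`. -/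
def alpha {μ : Measure Ω} (XX : Set (Fin d → (Ω →ₘ[μ] ℝ))) (EE' : Set (Ω →ₘ[μ] ℝ))
    (A : Set (Ω →ₘ[μ] ℝ)) (S : (Fin d → (Ω →ₘ[μ] ℝ)) → (Ω →ₘ[μ] ℝ)) :
    (Fin d → (Ω →ₘ[μ] ℝ)) → EReal :=
  penalty XX A S (barrS A EE')

/-- The penalty function `α⁺`. -/
def alphaPlus {μ : Measure Ω} (XX : Set (Fin d → (Ω →ₘ[μ] ℝ))) (EE' : Set (Ω →ₘ[μ] ℝ))
    (A : Set (Ω →ₘ[μ] ℝ)) (S : (Fin d → (Ω →ₘ[μ] ℝ)) → (Ω →ₘ[μ] ℝ)) :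
    (Fin d → (Ω →ₘ[μ] ℝ)) → EReal :=
  penalty XX A S (barrS A EE' ∩ (strictPos μ ∪ {0}))

/-- a.s. strictly positive random vectors. -/
def strictPosV (μ : Measure Ω) (d : ℕ) : Set (Fin d → (Ω →ₘ[μ] ℝ)) :=
  {Z | ∀ i, ∀ᵐ ω ∂μ, 0 < Z i ω}

/-- The set `C` of nonnegative dual vectors with all components of expectation one. -/
def Cset {μ : Measure Ω} (XX' : Set (Fin d → (Ω →ₘ[μ] ℝ))) : Set (Fin d → (Ω →ₘ[μ] ℝ)) :=
  {Z ∈ XX' | (∀ i, (0 : Ω →ₘ[μ] ℝ) ≤ Z i) ∧ ∀ i, (∫ ω, Z i ω ∂μ) = 1}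

/-- A map with values in `[−∞,∞]` is proper on `P` if it never attains `−∞` on `P`
and is finite somewhere on `P`. -/
def ProperOn {β : Type*} (P : Set β) (f : β → EReal) : Prop :=
  (∀ x ∈ P, f x ≠ ⊥) ∧ ∃ x ∈ P, f x ≠ ⊤

/-- The positive part of an extended real number, as an extended nonnegative real. -/
def epos (x : EReal) : ℝ≥0∞ := if x = ⊤ then ⊤ else ENNReal.ofReal x.toReal

/-- The integral of an extended-real-valued function. -/
def eintegral (μ : Measure Ω) (g : Ω → EReal) : EReal :=
  ((∫⁻ ω, epos (g ω) ∂μ : ℝ≥0∞) : EReal) - ((∫⁻ ω, epos (-(g ω)) ∂μ : ℝ≥0∞) : EReal)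


section WeakTopology

variable {E F : Type*} [AddCommGroup E] [Module ℝ E] [AddCommGroup F] [Module ℝ F]

theorem _root_.WeakBilin.geometric_hahn_banach_point_closed {B : E →ₗ[ℝ] F →ₗ[ℝ] ℝ}
    {C : Set (WeakBilin B)} (hC : Convex ℝ C) (hCc : IsClosed C) {x₀ : WeakBilin B} (hx₀ : x₀ ∉ C) :
    ∃ y : F, ∃ r : ℝ, B x₀ y < r ∧ ∀ x ∈ C, r < B x y := by
  obtain ⟨f, r, hf₀, hfC⟩ := _root_.geometric_hahn_banach_point_closed hC hCc hx₀
  obtain ⟨y, rfl⟩ := LinearMap.dualEmbedding_surjective B f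
  exact ⟨y, r, hf₀, hfC⟩

def _root_.LinearMap.prodMul (B : E →ₗ[ℝ] F →ₗ[ℝ] ℝ) :
    (E × ℝ) →ₗ[ℝ] (F × ℝ) →ₗ[ℝ] ℝ :=
  B.compl₁₂ (LinearMap.fst ℝ E ℝ) (LinearMap.fst ℝ F ℝ) +
    (LinearMap.mul ℝ ℝ).compl₁₂ (LinearMap.snd ℝ E ℝ) (LinearMap.snd ℝ F ℝ)

theorem _root_.LinearMap.prodMul_apply (B : E →ₗ[ℝ] F →ₗ[ℝ] ℝ) (p : E × ℝ) (q : F × ℝ) :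
    B.prodMul p q = B p.1 q.1 + p.2 * q.2 := rfl

theorem _root_.WeakBilin.exists_le_affine_of_concaveOn {B : E →ₗ[ℝ] F →ₗ[ℝ] ℝ}
    {φ : WeakBilin B → ℝ} (hφ : ConcaveOn ℝ univ φ) (hφc : UpperSemicontinuous φ)
    {x₀ : WeakBilin B} {c : ℝ} (hc : φ x₀ < c) : ∃ y : F, ∀ x, φ x ≤ c + (B x y - B x₀ y) := by
  let e : WeakBilin B.prodMul → WeakBilin B × ℝ :=
    fun p => (((p : E × ℝ).1 : WeakBilin B), (p : E × ℝ).2)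
  have he : Continuous e := by
    refine .prodMk (WeakBilin.continuous_of_continuous_eval B fun y => ?_) ?_
    · exact (WeakBilin.eval_continuous B.prodMul (y, 0)).congr fun p =>
        (B.prodMul_apply p (y, 0)).trans (by simp)
    · exact (WeakBilin.eval_continuous B.prodMul (0, 1)).congr fun p =>
        (B.prodMul_apply p (0, 1)).trans (by simp)
  set H : Set (WeakBilin B.prodMul) := e ⁻¹' {p | p.2 ≤ φ p.1}
  have hHc : IsClosed H := hφc.IsClosed_hypograph.preimage he
  have hH : Convex ℝ H := fun p hp q hq a b ha hb hab =>
    (hφ.convex_hypograph ⟨trivial, hp⟩ ⟨trivial, hq⟩ ha hb hab).2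
  obtain ⟨⟨y, s⟩, r, h₀, hHr⟩ := WeakBilin.geometric_hahn_banach_point_closed hH hHc
    (x₀ := ((x₀, c) : E × ℝ)) (not_le.2 hc)
  have hsep : ∀ x, ∀ t ≤ φ x, B x₀ y + c * s < B x y + t * s := fun x t ht =>
    h₀.trans (hHr ((x : E), t) ht)
  -- the hypograph is unbounded below, which forces the `ℝ`-component of the functional below 0
  have hs : s < 0 := by
    by_contra! hs
    linarith [hsep x₀ _ (min_le_left (φ x₀) c),
      mul_le_mul_of_nonneg_right (min_le_right (φ x₀) c) hs]
  refine ⟨(-s)⁻¹ • y, fun x => ?_⟩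
  rw [map_smul, map_smul, smul_eq_mul, smul_eq_mul, ← mul_sub, ← div_eq_inv_mul,
    ← sub_le_iff_le_add', le_div_iff₀ (neg_pos.2 hs)]
  linarith [hsep x (φ x) le_rfl]

end WeakTopology

section Pairing

variable {μ : Measure Ω}

theorem _root_.MeasureTheory.AEEqFun.nonneg_iff_ae {f : Ω →ₘ[μ] ℝ} :
    0 ≤ f ↔ ∀ᵐ ω ∂μ, 0 ≤ f ω := by
  rw [← AEEqFun.coeFn_le]
  refine eventually_congr ?_
  filter_upwards [AEEqFun.coeFn_zero (α := Ω) (μ := μ) (β := ℝ)] with ω h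
  rw [h, Pi.zero_apply]

theorem _root_.MeasureTheory.AEEqFun.smul_nonneg {c : ℝ} (hc : 0 ≤ c) {f : Ω →ₘ[μ] ℝ}
    (hf : 0 ≤ f) : 0 ≤ c • f := AEEqFun.nonneg_iff_ae.2 <| by
  filter_upwards [AEEqFun.coeFn_smul c f, AEEqFun.nonneg_iff_ae.1 hf] with ω h h'
  simpa [h] using mul_nonneg hc h'

theorem ip_add_left {U V W : Ω →ₘ[μ] ℝ} (hU : Integrable (fun ω => U ω * W ω) μ)
    (hV : Integrable (fun ω => V ω * W ω) μ) : ip (U + V) W = ip U W + ip V W := by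
  rw [ip, ip, ip, ← integral_add hU hV]
  refine integral_congr_ae ?_
  filter_upwards [AEEqFun.coeFn_add U V] with ω h
  simp [h, add_mul]

theorem ip_add_right {U W W' : Ω →ₘ[μ] ℝ} (hW : Integrable (fun ω => U ω * W ω) μ)
    (hW' : Integrable (fun ω => U ω * W' ω) μ) : ip U (W + W') = ip U W + ip U W' := by
  rw [ip, ip, ip, ← integral_add hW hW']
  refine integral_congr_ae ?_
  filter_upwards [AEEqFun.coeFn_add W W'] with ω h
  simp [h, mul_add]

theorem ip_smul_left (c : ℝ) (U W : Ω →ₘ[μ] ℝ) : ip (c • U) W = c * ip U W := by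
  rw [ip, ip, ← integral_const_mul]
  refine integral_congr_ae ?_
  filter_upwards [AEEqFun.coeFn_smul c U] with ω h
  simp [h, mul_assoc]

theorem ip_smul_right (c : ℝ) (U W : Ω →ₘ[μ] ℝ) : ip U (c • W) = c * ip U W := by
  rw [ip, ip, ← integral_const_mul]
  refine integral_congr_ae ?_
  filter_upwards [AEEqFun.coeFn_smul c W] with ω h
  simp [h, mul_left_comm]

theorem ip_mono_left {U V W : Ω →ₘ[μ] ℝ} (hUV : U ≤ V) (hW : 0 ≤ W)
    (hU : Integrable (fun ω => U ω * W ω) μ) (hV : Integrable (fun ω => V ω * W ω) μ) :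
    ip U W ≤ ip V W := by
  refine integral_mono_ae hU hV ?_
  filter_upwards [AEEqFun.coeFn_le.2 hUV, AEEqFun.nonneg_iff_ae.1 hW] with ω hUVω hWω
  exact mul_le_mul_of_nonneg_right hUVω hWω

theorem pairing_add_left {d : ℕ} {X Y Z : Fin d → Ω →ₘ[μ] ℝ}
    (hX : ∀ i, Integrable (fun ω => X i ω * Z i ω) μ)
    (hY : ∀ i, Integrable (fun ω => Y i ω * Z i ω) μ) :
    pairing (X + Y) Z = pairing X Z + pairing Y Z := by
  simp only [pairing, ← Finset.sum_add_distrib]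
  exact Finset.sum_congr rfl fun i _ => ip_add_left (hX i) (hY i)

theorem pairing_add_right {d : ℕ} {X Z Z' : Fin d → Ω →ₘ[μ] ℝ}
    (hZ : ∀ i, Integrable (fun ω => X i ω * Z i ω) μ)
    (hZ' : ∀ i, Integrable (fun ω => X i ω * Z' i ω) μ) :
    pairing X (Z + Z') = pairing X Z + pairing X Z' := by
  simp only [pairing, ← Finset.sum_add_distrib]
  exact Finset.sum_congr rfl fun i _ => ip_add_right (hZ i) (hZ' i)

theorem pairing_smul_left {d : ℕ} (c : ℝ) (X Z : Fin d → Ω →ₘ[μ] ℝ) :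
    pairing (c • X) Z = c * pairing X Z := by
  simp only [pairing, Finset.mul_sum]
  exact Finset.sum_congr rfl fun i _ => ip_smul_left c (X i) (Z i)

theorem pairing_smul_right {d : ℕ} (c : ℝ) (X Z : Fin d → Ω →ₘ[μ] ℝ) :
    pairing X (c • Z) = c * pairing X Z := by
  simp only [pairing, Finset.mul_sum]
  exact Finset.sum_congr rfl fun i _ => ip_smul_right c (X i) (Z i)

end Pairing

section Subspaces

variable {μ : Measure Ω}

def IsAdmissible.toSubmodule {L : Set (Ω →ₘ[μ] ℝ)} {nrm : (Ω →ₘ[μ] ℝ) → ℝ}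
    (hL : IsAdmissible L nrm) : Submodule ℝ (Ω →ₘ[μ] ℝ) where
  carrier := L
  zero_mem' := hL.zero_mem
  add_mem' hf hg := hL.add_mem _ hf _ hg
  smul_mem' c _ hf := hL.smul_mem c _ hf

def kdualSubmodule (L : Set (Ω →ₘ[μ] ℝ)) : Submodule ℝ (Ω →ₘ[μ] ℝ) where
  carrier := kdual L
  zero_mem' f _ := (integrable_zero Ω ℝ μ).congr <| by
    filter_upwards [(AEEqFun.coeFn_zero : ⇑(0 : Ω →ₘ[μ] ℝ) =ᵐ[μ] 0)] with ω h
    simp [h]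
  add_mem' {Z Z'} hZ hZ' f hf := ((hZ f hf).add (hZ' f hf)).congr <| by
    filter_upwards [AEEqFun.coeFn_add Z Z'] with ω h
    simp [h, mul_add]
  smul_mem' c Z hZ f hf := ((hZ f hf).const_mul c).congr <| by
    filter_upwards [AEEqFun.coeFn_smul c Z] with ω h
    simp [h, mul_left_comm]

theorem mem_kdualSubmodule {L : Set (Ω →ₘ[μ] ℝ)} {Z : Ω →ₘ[μ] ℝ} :
    Z ∈ kdualSubmodule L ↔ Z ∈ kdual L := Iff.rfl

def piSubmodule {d : ℕ} (p : Fin d → Submodule ℝ (Ω →ₘ[μ] ℝ)) :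
    Submodule ℝ (Fin d → Ω →ₘ[μ] ℝ) where
  carrier := {X | ∀ i, X i ∈ p i}
  zero_mem' i := (p i).zero_mem
  add_mem' hX hY i := (p i).add_mem (hX i) (hY i)
  smul_mem' c _ hX i := (p i).smul_mem c (hX i)

-- `WeakBilin (ipBilin hE)` and `WeakBilin (pairingBilin hLi)` carry, by definition, the weak
-- topologies `wtop1 EE (kdual EE)` and `wtop (prodSet Li) (prodSet fun i => kdual (Li i))`.
def ipBilin {L : Set (Ω →ₘ[μ] ℝ)} {nrm : (Ω →ₘ[μ] ℝ) → ℝ} (hL : IsAdmissible L nrm) :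
    hL.toSubmodule →ₗ[ℝ] kdualSubmodule L →ₗ[ℝ] ℝ :=
  LinearMap.mk₂ ℝ (fun U W => ip (U : Ω →ₘ[μ] ℝ) W)
    (fun U V W => ip_add_left (mem_kdualSubmodule.1 W.2 _ U.2) (mem_kdualSubmodule.1 W.2 _ V.2))
    (fun c _ _ => ip_smul_left c _ _)
    (fun U W W' => ip_add_right (mem_kdualSubmodule.1 W.2 _ U.2)
      (mem_kdualSubmodule.1 W'.2 _ U.2)) (fun c _ _ => ip_smul_right c _ _)

def pairingBilin {d : ℕ} {Li : Fin d → Set (Ω →ₘ[μ] ℝ)} {nrmX : Fin d → (Ω →ₘ[μ] ℝ) → ℝ}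
    (hLi : ∀ i, IsAdmissible (Li i) (nrmX i)) :
    piSubmodule (fun i => (hLi i).toSubmodule) →ₗ[ℝ]
      piSubmodule (fun i => kdualSubmodule (Li i)) →ₗ[ℝ] ℝ :=
  LinearMap.mk₂ ℝ (fun X Z => pairing (X : Fin d → Ω →ₘ[μ] ℝ) Z)
    (fun X Y Z => pairing_add_left (fun i => mem_kdualSubmodule.1 (Z.2 i) _ (X.2 i))
      (fun i => mem_kdualSubmodule.1 (Z.2 i) _ (Y.2 i)))
    (fun c _ _ => pairing_smul_left c _ _)
    (fun X Z Z' => pairing_add_right (fun i => mem_kdualSubmodule.1 (Z.2 i) _ (X.2 i))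
      (fun i => mem_kdualSubmodule.1 (Z'.2 i) _ (X.2 i)))
    (fun c _ _ => pairing_smul_right c _ _)

end Subspaces

section Positivity

variable {μ : Measure Ω}

theorem nonneg_of_ip_nonneg {W : Ω →ₘ[μ] ℝ}
    (hint : ∀ V : Ω →ₘ[μ] ℝ, EssBdd V → Integrable (fun ω => V ω * W ω) μ)
    (hpos : ∀ V : Ω →ₘ[μ] ℝ, EssBdd V → 0 ≤ V → 0 ≤ ip V W) : 0 ≤ W := by
  obtain ⟨V, hV⟩ : ∃ V : Ω →ₘ[μ] ℝ, ⇑V =ᵐ[μ] fun ω => (Iio 0).indicator 1 (W ω) :=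
    ⟨_, AEEqFun.coeFn_compMeasurable _ ((measurable_one (α := ℝ)).indicator measurableSet_Iio) W⟩
  have hVbdd : EssBdd V := ⟨1, by
    filter_upwards [hV] with ω h
    by_cases hω : W ω < 0 <;> simp [h, hω]⟩
  have hV0 : 0 ≤ V := AEEqFun.nonneg_iff_ae.2 <| by
    filter_upwards [hV] with ω h
    by_cases hω : W ω < 0 <;> simp [h, hω]
  have hmin : (fun ω => V ω * W ω) =ᵐ[μ] fun ω => -max (-W ω) 0 := by
    filter_upwards [hV] with ω h
    by_cases hω : W ω < 0
    · simp [h, hω, hω.le]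
    · simp [h, hω, not_lt.1 hω]
  have hzero : (fun ω => max (-W ω) 0) =ᵐ[μ] 0 := by
    refine (integral_eq_zero_iff_of_nonneg (f := fun ω => max (-W ω) 0)
      (fun ω => le_max_right _ _)
      (by simpa using ((hint V hVbdd).congr hmin).neg)).1 ?_
    have := hpos V hVbdd hV0
    rw [ip, integral_congr_ae hmin, integral_neg] at this
    exact le_antisymm (by linarith) (integral_nonneg fun ω => le_max_right _ _)
  refine AEEqFun.nonneg_iff_ae.2 ?_
  filter_upwards [hzero] with ω h
  simpa using h

theorem ip_nonneg_of_forall_le_ip {EE : Set (Ω →ₘ[μ] ℝ)} {nrmE : (Ω →ₘ[μ] ℝ) → ℝ}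
    (hE : IsAdmissible EE nrmE) {A : Set (Ω →ₘ[μ] ℝ)} (h0A : 0 ∈ A)
    (hmono : ∀ U ∈ A, ∀ V ∈ EE, 0 ≤ V → U + V ∈ A) {W : Ω →ₘ[μ] ℝ} {u : ℝ}
    (hu : ∀ U ∈ A, u ≤ ip U W) {V : Ω →ₘ[μ] ℝ} (hV : V ∈ EE) (hV0 : 0 ≤ V) :
    0 ≤ ip V W := by
  have hbdd : ∀ t : ℝ, 0 ≤ t → u ≤ t * ip V W := fun t ht => by
    have := hu _ (hmono 0 h0A (t • V) (hE.smul_mem t V hV) (AEEqFun.smul_nonneg ht hV0))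
    rwa [zero_add, ip_smul_left] at this
  by_contra! hneg
  have := hbdd ((|u| + 1) / -ip V W) (div_nonneg (by positivity) (by linarith))
  rw [div_mul_eq_mul_div, div_neg, mul_div_cancel_right₀ _ hneg.ne] at this
  linarith [neg_abs_le u]

theorem nonneg_of_forall_le_ip {EE : Set (Ω →ₘ[μ] ℝ)} {nrmE : (Ω →ₘ[μ] ℝ) → ℝ}
    (hE : IsAdmissible EE nrmE) {A : Set (Ω →ₘ[μ] ℝ)} (h0A : 0 ∈ A)
    (hmono : ∀ U ∈ A, ∀ V ∈ EE, 0 ≤ V → U + V ∈ A) {W : Ω →ₘ[μ] ℝ} (hW : W ∈ kdual EE)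
    {u : ℝ} (hu : ∀ U ∈ A, u ≤ ip U W) : 0 ≤ W :=
  nonneg_of_ip_nonneg (fun V hV => hW V (hE.linfty_subset V hV))
    fun V hV hV0 => ip_nonneg_of_forall_le_ip hE h0A hmono hu (hE.linfty_subset V hV) hV0

end Positivity

section Separation

open Topology

variable {μ : Measure Ω}

def StrictlySeparates (W U₀ : Ω →ₘ[μ] ℝ) (A : Set (Ω →ₘ[μ] ℝ)) : Prop :=
  ∃ u : ℝ, ip U₀ W < u ∧ ∀ U ∈ A, u ≤ ip U W

theorem StrictlySeparates.bot_lt_suppS {W U₀ : Ω →ₘ[μ] ℝ} {A : Set (Ω →ₘ[μ] ℝ)}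
    (h : StrictlySeparates W U₀ A) : ⊥ < suppS A W :=
  let ⟨u, _, hu⟩ := h
  (EReal.bot_lt_coe u).trans_le (le_iInf₂ fun U hU => EReal.coe_le_coe_iff.2 (hu U hU))

theorem exists_le_ip_of_bot_lt_suppS {A : Set (Ω →ₘ[μ] ℝ)} {W : Ω →ₘ[μ] ℝ}
    (hW : ⊥ < suppS A W) : ∃ u : ℝ, ∀ U ∈ A, u ≤ ip U W := by
  obtain ⟨u, -, hu⟩ := EReal.lt_iff_exists_real_btwn.1 hW
  exact ⟨u, fun U hU => EReal.coe_le_coe_iff.1 (hu.le.trans (iInf₂_le U hU))⟩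

theorem exists_strictlySeparates {EE : Set (Ω →ₘ[μ] ℝ)} {nrmE : (Ω →ₘ[μ] ℝ) → ℝ}
    (hE : IsAdmissible EE nrmE) {A : Set (Ω →ₘ[μ] ℝ)} (hAE : A ⊆ EE)
    (hconv : ∀ U ∈ A, ∀ V ∈ A, ∀ t : ℝ, 0 ≤ t → t ≤ 1 → t • U + (1 - t) • V ∈ A)
    (hclosed : @IsClosed (↥EE) (wtop1 EE (kdual EE)) {U : ↥EE | (U : Ω →ₘ[μ] ℝ) ∈ A})
    {U₀ : Ω →ₘ[μ] ℝ} (hU₀ : U₀ ∈ EE) (hU₀A : U₀ ∉ A) :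
    ∃ W ∈ kdual EE, StrictlySeparates W U₀ A := by
  let C : Set (WeakBilin (ipBilin hE)) := {U | Subtype.val (U : ↥hE.toSubmodule) ∈ A}
  have hC : Convex ℝ C := fun U hU V hV a b ha hb hab => by
    obtain rfl : b = 1 - a := eq_sub_of_add_eq' hab
    exact hconv _ hU _ hV a ha (by linarith)
  obtain ⟨W, u, hu₀, hu⟩ :=
    WeakBilin.geometric_hahn_banach_point_closed hC hclosed (x₀ := ⟨U₀, hU₀⟩) hU₀A
  exact ⟨W, W.2, u, hu₀, fun U hU => (hu ⟨U, hAE hU⟩ hU).le⟩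

theorem exists_mem_Ioo_lerp_lt {a u : ℝ} (h : a < u) (e σ : ℝ) :
    ∃ l ∈ Ioo (0 : ℝ) 1, (1 - l) * a + l * e < (1 - l) * u + l * σ := by
  have hcont : Continuous fun l : ℝ => (1 - l) * u + l * σ - ((1 - l) * a + l * e) := by
    fun_prop
  have h0 : ∀ᶠ l in 𝓝 (0 : ℝ), 0 < (1 - l) * u + l * σ - ((1 - l) * a + l * e) :=
    continuousAt_const.eventually_lt hcont.continuousAt (by simpa using h)
  obtain ⟨l, hl, hl'⟩ :=
    (Filter.Eventually.and (Ioo_mem_nhdsGT one_pos) (h0.filter_mono nhdsWithin_le_nhds)).exists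
  exact ⟨l, hl, by linarith⟩

theorem StrictlySeparates.exists_lerp {EE A : Set (Ω →ₘ[μ] ℝ)} (hAE : A ⊆ EE)
    {U₀ W W₀ : Ω →ₘ[μ] ℝ} (hU₀ : U₀ ∈ EE) (hW : W ∈ kdual EE) (hW₀ : W₀ ∈ kdual EE)
    (hsep : StrictlySeparates W U₀ A) {σ : ℝ} (hσ : ∀ U ∈ A, σ ≤ ip U W₀) :
    ∃ l ∈ Ioo (0 : ℝ) 1, StrictlySeparates ((1 - l) • W + l • W₀) U₀ A := by
  obtain ⟨u, hu₀, hu⟩ := hsep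
  obtain ⟨l, hl, hlt⟩ := exists_mem_Ioo_lerp_lt hu₀ (ip U₀ W₀) σ
  have hip : ∀ U ∈ EE, ip U ((1 - l) • W + l • W₀) = (1 - l) * ip U W + l * ip U W₀ :=
    fun U hU => by
      rw [ip_add_right ((kdualSubmodule EE).smul_mem _ hW U hU)
        ((kdualSubmodule EE).smul_mem _ hW₀ U hU), ip_smul_right, ip_smul_right]
  refine ⟨l, hl, (1 - l) * u + l * σ, by rwa [hip U₀ hU₀], fun U hU => ?_⟩
  rw [hip U (hAE hU)]
  exact add_le_add (mul_le_mul_of_nonneg_left (hu U hU) (by linarith [hl.2]))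
    (mul_le_mul_of_nonneg_left (hσ U hU) hl.1.le)

theorem lerp_mem_strictPos {W W₀ : Ω →ₘ[μ] ℝ} (hW : 0 ≤ W) (hW₀ : W₀ ∈ strictPos μ) {l : ℝ}
    (hl : l ∈ Ioo (0 : ℝ) 1) : (1 - l) • W + l • W₀ ∈ strictPos μ := by
  show ∀ᵐ ω ∂μ, 0 < ((1 - l) • W + l • W₀) ω
  filter_upwards [AEEqFun.coeFn_add ((1 - l) • W) (l • W₀), AEEqFun.coeFn_smul (1 - l) W,
    AEEqFun.coeFn_smul l W₀, AEEqFun.nonneg_iff_ae.1 hW, hW₀] with ω h h₁ h₂ hWω hW₀ω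
  simp only [h, Pi.add_apply, h₁, h₂, Pi.smul_apply, smul_eq_mul]
  exact add_pos_of_nonneg_of_pos (mul_nonneg (by linarith [hl.2]) hWω) (mul_pos hl.1 hW₀ω)

theorem nonneg_of_mem_strictPos {W : Ω →ₘ[μ] ℝ} (hW : W ∈ strictPos μ) : 0 ≤ W :=
  AEEqFun.nonneg_iff_ae.2 <| (show ∀ᵐ ω ∂μ, 0 < W ω from hW).mono fun _ => le_of_lt

end Separation

section Representation

variable {μ : Measure Ω} {d : ℕ} {Li : Fin d → Set (Ω →ₘ[μ] ℝ)}
  {nrmX : Fin d → (Ω →ₘ[μ] ℝ) → ℝ} {EE : Set (Ω →ₘ[μ] ℝ)} {nrmE : (Ω →ₘ[μ] ℝ) → ℝ}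
  {S : (Fin d → Ω →ₘ[μ] ℝ) → Ω →ₘ[μ] ℝ} {A : Set (Ω →ₘ[μ] ℝ)}

theorem ip_impact_concave (hLi : ∀ i, IsAdmissible (Li i) (nrmX i))
    (hE : IsAdmissible EE nrmE)
    (hS : IsAdmissibleImpact (prodSet Li) (prodSet fun i => kdual (Li i)) EE (kdual EE) S)
    {W : Ω →ₘ[μ] ℝ} (hW : W ∈ kdual EE) (hW0 : 0 ≤ W) {X Y : Fin d → Ω →ₘ[μ] ℝ}
    (hX : X ∈ prodSet Li) (hY : Y ∈ prodSet Li) {a b : ℝ} (ha : 0 ≤ a) (hb : 0 ≤ b)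
    (hab : a + b = 1) : a * ip (S X) W + b * ip (S Y) W ≤ ip (S (a • X + b • Y)) W := by
  obtain rfl : b = 1 - a := eq_sub_of_add_eq' hab
  have hXY : a • X + (1 - a) • Y ∈ prodSet Li := fun i =>
    (hLi i).add_mem _ ((hLi i).smul_mem a _ (hX i)) _ ((hLi i).smul_mem _ _ (hY i))
  have hSX := hS.mapsTo X hX
  have hSY := hS.mapsTo Y hY
  calc a * ip (S X) W + (1 - a) * ip (S Y) W = ip (a • S X + (1 - a) • S Y) W := by
        rw [ip_add_left (hW _ (hE.smul_mem a _ hSX)) (hW _ (hE.smul_mem _ _ hSY)),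
          ip_smul_left, ip_smul_left]
    _ ≤ ip (S (a • X + (1 - a) • Y)) W :=
        ip_mono_left (hS.concave X hX Y hY a ha (by linarith)) hW0
          (hW _ (hE.add_mem _ (hE.smul_mem a _ hSX) _ (hE.smul_mem _ _ hSY)))
          (hW _ (hS.mapsTo _ hXY))

theorem exists_le_affine_ip_impact (hLi : ∀ i, IsAdmissible (Li i) (nrmX i))
    (hE : IsAdmissible EE nrmE)
    (hS : IsAdmissibleImpact (prodSet Li) (prodSet fun i => kdual (Li i)) EE (kdual EE) S)
    {W : Ω →ₘ[μ] ℝ} (hW : W ∈ kdual EE) (hW0 : 0 ≤ W) {X : Fin d → Ω →ₘ[μ] ℝ}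
    (hX : X ∈ prodSet Li) {c : ℝ} (hc : ip (S X) W < c) :
    ∃ Z ∈ prodSet fun i => kdual (Li i),
      ∀ Y ∈ prodSet Li, ip (S Y) W ≤ c + (pairing Y Z - pairing X Z) := by
  let φ : WeakBilin (pairingBilin hLi) → ℝ :=
    fun Y => ip (S (Subtype.val (Y : ↥(piSubmodule fun i => (hLi i).toSubmodule)))) W
  have hφ : ConcaveOn ℝ univ φ := ⟨convex_univ, fun Y _ Y' _ _ _ ha hb hab =>
    ip_impact_concave hLi hE hS hW hW0 (Subtype.property (p := (· ∈ prodSet Li)) Y)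
      (Subtype.property (p := (· ∈ prodSet Li)) Y') ha hb hab⟩
  obtain ⟨Z, hZ⟩ :=
    WeakBilin.exists_le_affine_of_concaveOn hφ (hS.usc W hW hW0) (x₀ := ⟨X, hX⟩) hc
  exact ⟨Z, Z.2, fun Y hY => hZ ⟨Y, hY⟩⟩

theorem penalty_le_pairing {XX : Set (Fin d → Ω →ₘ[μ] ℝ)} (K : Set (Ω →ₘ[μ] ℝ))
    {X : Fin d → Ω →ₘ[μ] ℝ} (hX : X ∈ XX) (hSX : S X ∈ A) (Z : Fin d → Ω →ₘ[μ] ℝ) :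
    penalty XX A S K Z ≤ ((pairing X Z : ℝ) : EReal) := by
  refine iSup₂_le fun W _ => ?_
  calc suppS A W + ⨅ Y ∈ XX, ((pairing Y Z - ∫ ω, S Y ω * W ω ∂μ : ℝ) : EReal)
      ≤ ((ip (S X) W : ℝ) : EReal) + ((pairing X Z - ip (S X) W : ℝ) : EReal) :=
        add_le_add (iInf₂_le _ hSX) (iInf₂_le _ hX)
    _ = ((pairing X Z : ℝ) : EReal) := by rw [← EReal.coe_add, add_sub_cancel]

theorem exists_pairing_lt_penalty (hLi : ∀ i, IsAdmissible (Li i) (nrmX i))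
    (hE : IsAdmissible EE nrmE)
    (hS : IsAdmissibleImpact (prodSet Li) (prodSet fun i => kdual (Li i)) EE (kdual EE) S)
    {K : Set (Ω →ₘ[μ] ℝ)} (hKE : K ⊆ kdual EE) {X : Fin d → Ω →ₘ[μ] ℝ}
    (hX : X ∈ prodSet Li) {W : Ω →ₘ[μ] ℝ} (hWK : W ∈ K) (hW0 : 0 ≤ W)
    (hsep : StrictlySeparates W (S X) A) :
    ∃ Z ∈ prodSet fun i => kdual (Li i),
      ((pairing X Z : ℝ) : EReal) < penalty (prodSet Li) A S K Z := by
  obtain ⟨u, hu₀, hu⟩ := hsep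
  obtain ⟨c, hc₀, hcu⟩ := exists_between hu₀
  obtain ⟨Z, hZ, hle⟩ := exists_le_affine_ip_impact hLi hE hS (hKE hWK) hW0 hX hc₀
  refine ⟨Z, hZ, ?_⟩
  calc ((pairing X Z : ℝ) : EReal) < ((u + (pairing X Z - c) : ℝ) : EReal) := by
        exact_mod_cast (by linarith)
    _ = (u : EReal) + ((pairing X Z - c : ℝ) : EReal) := EReal.coe_add _ _
    _ ≤ suppS A W + ⨅ Y ∈ prodSet Li, ((pairing Y Z - ∫ ω, S Y ω * W ω ∂μ : ℝ) : EReal) :=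
        add_le_add (le_iInf₂ fun U hU => EReal.coe_le_coe_iff.2 (hu U hU))
          (le_iInf₂ fun Y hY => EReal.coe_le_coe_iff.2
            (by linarith [hle Y hY] : pairing X Z - c ≤ pairing Y Z - ip (S Y) W))
    _ ≤ penalty (prodSet Li) A S K Z :=
        le_iSup₂ (f := fun W (_ : W ∈ K) => suppS A W +
          ⨅ Y ∈ prodSet Li, ((pairing Y Z - ∫ ω, S Y ω * W ω ∂μ : ℝ) : EReal)) W hWK

theorem sysAcc_eq_iInter_penalty (hLi : ∀ i, IsAdmissible (Li i) (nrmX i))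
    (hE : IsAdmissible EE nrmE)
    (hS : IsAdmissibleImpact (prodSet Li) (prodSet fun i => kdual (Li i)) EE (kdual EE) S)
    {K : Set (Ω →ₘ[μ] ℝ)} (hKE : K ⊆ kdual EE)
    (hK : ∀ X ∈ prodSet Li, S X ∉ A → ∃ W ∈ K, 0 ≤ W ∧ StrictlySeparates W (S X) A) :
    sysAcc (prodSet Li) S A =
      ⋂ Z ∈ prodSet fun i => kdual (Li i),
        {X ∈ prodSet Li | penalty (prodSet Li) A S K Z ≤ ((pairing X Z : ℝ) : EReal)} := by
  ext X
  simp only [sysAcc, mem_iInter₂, mem_ofPred_eq]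
  constructor
  · rintro ⟨hX, hSX⟩ Z -
    exact ⟨hX, penalty_le_pairing K hX hSX Z⟩
  · intro h
    have hX := (h 0 (piSubmodule fun i => kdualSubmodule (Li i)).zero_mem).1
    refine ⟨hX, by_contra fun hSX => ?_⟩
    obtain ⟨W, hWK, hW0, hsep⟩ := hK X hX hSX
    obtain ⟨Z, hZ, hlt⟩ := exists_pairing_lt_penalty hLi hE hS hKE hX hWK hW0 hsep
    exact (h Z hZ).2.not_gt hlt

theorem exists_mem_barrS_strictlySeparates (hE : IsAdmissible EE nrmE)
    {XX : Set (Fin d → Ω →ₘ[μ] ℝ)} (hA : IsAdmissibleAcceptance XX EE (kdual EE) S A)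
    {U₀ : Ω →ₘ[μ] ℝ} (hU₀ : U₀ ∈ EE) (hU₀A : U₀ ∉ A) :
    ∃ W ∈ barrS A (kdual EE), 0 ≤ W ∧ StrictlySeparates W U₀ A := by
  obtain ⟨W, hW, hsep⟩ := exists_strictlySeparates hE hA.subset hA.convex hA.closed hU₀ hU₀A
  have hW0 : 0 ≤ W :=
    let ⟨_, _, hu⟩ := hsep
    nonneg_of_forall_le_ip hE hA.zero_mem hA.mono hW hu
  exact ⟨W, ⟨hW, hsep.bot_lt_suppS⟩, hW0, hsep⟩

theorem exists_mem_barrS_strictPos_strictlySeparates (hE : IsAdmissible EE nrmE)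
    {XX : Set (Fin d → Ω →ₘ[μ] ℝ)} (hA : IsAdmissibleAcceptance XX EE (kdual EE) S A)
    {W₀ : Ω →ₘ[μ] ℝ} (hW₀ : W₀ ∈ barrS A (kdual EE) ∩ strictPos μ)
    {U₀ : Ω →ₘ[μ] ℝ} (hU₀ : U₀ ∈ EE) (hU₀A : U₀ ∉ A) :
    ∃ W ∈ barrS A (kdual EE) ∩ (strictPos μ ∪ {0}), 0 ≤ W ∧ StrictlySeparates W U₀ A := by
  obtain ⟨W, ⟨hW, -⟩, hW0, hsep⟩ := exists_mem_barrS_strictlySeparates hE hA hU₀ hU₀A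
  obtain ⟨⟨hW₀, hW₀A⟩, hW₀pos⟩ := hW₀
  obtain ⟨σ, hσ⟩ := exists_le_ip_of_bot_lt_suppS hW₀A
  obtain ⟨l, hl, hsep'⟩ := hsep.exists_lerp hA.subset hU₀ hW hW₀ hσ
  have hpos := lerp_mem_strictPos hW0 hW₀pos hl
  refine ⟨_, ⟨⟨?_, hsep'.bot_lt_suppS⟩, Or.inl hpos⟩,
    nonneg_of_mem_strictPos hpos, hsep'⟩
  exact (kdualSubmodule EE).add_mem ((kdualSubmodule EE).smul_mem _ hW)
    ((kdualSubmodule EE).smul_mem _ hW₀)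

end Representation

theorem statement7_general {μ : Measure Ω} {d : ℕ}
    (Li : Fin d → Set (Ω →ₘ[μ] ℝ)) (nrmX : Fin d → ((Ω →ₘ[μ] ℝ) → ℝ))
    (EE : Set (Ω →ₘ[μ] ℝ)) (nrmE : (Ω →ₘ[μ] ℝ) → ℝ)
    (S : (Fin d → (Ω →ₘ[μ] ℝ)) → (Ω →ₘ[μ] ℝ)) (A : Set (Ω →ₘ[μ] ℝ))
    (hLi : ∀ i, IsAdmissible (Li i) (nrmX i))
    (hE : IsAdmissible EE nrmE)
    (hS : IsAdmissibleImpact (prodSet Li) (prodSet fun i => kdual (Li i)) EE (kdual EE) S)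
    (hA : IsAdmissibleAcceptance (prodSet Li) EE (kdual EE) S A) :
    (sysAcc (prodSet Li) S A =
      ⋂ Z ∈ prodSet fun i => kdual (Li i),
        {X ∈ prodSet Li | alpha (prodSet Li) (kdual EE) A S Z ≤ ((pairing X Z : ℝ) : EReal)}) ∧
    ((barrS A (kdual EE) ∩ strictPos μ).Nonempty →
      sysAcc (prodSet Li) S A =
        ⋂ Z ∈ prodSet fun i => kdual (Li i),
          {X ∈ prodSet Li |
            alphaPlus (prodSet Li) (kdual EE) A S Z ≤ ((pairing X Z : ℝ) : EReal)}) :=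
  ⟨sysAcc_eq_iInter_penalty hLi hE hS (fun _ hW => hW.1) fun X hX hSX =>
      exists_mem_barrS_strictlySeparates hE hA (hS.mapsTo X hX) hSX,
    fun ⟨_, hW₀⟩ => sysAcc_eq_iInter_penalty hLi hE hS (fun _ hW => hW.1.1) fun X hX hSX =>
      exists_mem_barrS_strictPos_strictlySeparates hE hA hW₀ (hS.mapsTo X hX) hSX⟩

/-- dual representation of the systemic acceptance set via `α` and `α⁺`. -/
theorem statement7 {μ : Measure Ω} [IsProbabilityMeasure μ] {d : ℕ}
    (Li : Fin d → Set (Ω →ₘ[μ] ℝ)) (nrmX : Fin d → ((Ω →ₘ[μ] ℝ) → ℝ))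
    (EE : Set (Ω →ₘ[μ] ℝ)) (nrmE : (Ω →ₘ[μ] ℝ) → ℝ)
    (S : (Fin d → (Ω →ₘ[μ] ℝ)) → (Ω →ₘ[μ] ℝ)) (A : Set (Ω →ₘ[μ] ℝ))
    (hLi : ∀ i, IsAdmissible (Li i) (nrmX i))
    (hE : IsAdmissible EE nrmE)
    (hS : IsAdmissibleImpact (prodSet Li) (prodSet fun i => kdual (Li i)) EE (kdual EE) S)
    (hA : IsAdmissibleAcceptance (prodSet Li) EE (kdual EE) S A) :
    (sysAcc (prodSet Li) S A =
      ⋂ Z ∈ prodSet fun i => kdual (Li i),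
        {X ∈ prodSet Li | alpha (prodSet Li) (kdual EE) A S Z ≤ ((pairing X Z : ℝ) : EReal)}) ∧
    ((barrS A (kdual EE) ∩ strictPos μ).Nonempty →
      sysAcc (prodSet Li) S A =
        ⋂ Z ∈ prodSet fun i => kdual (Li i),
          {X ∈ prodSet Li |
            alphaPlus (prodSet Li) (kdual EE) A S Z ≤ ((pairing X Z : ℝ) : EReal)}) :=
  statement7_general Li nrmX EE nrmE S A hLi hE hS hA

end SystemicRisk
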